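/- arXiv:1812.02457 — 2 statements merged into one kernel-verified Lean document; each statement's English description precedes it below -/
import Mathlib

section
/- Assume Δ ≥ 1/2 and ‖V‖ ≤ 2. Then there exist a universal constant C > 0 and a universal t₀ > 0 such that for all 0 < t < t₀: the series S := ∑_{j=1}^{∞} t^j S_j and ∑_{j=1}^{∞} t^{j−1} V_j^{diag} converge in operator norm, and ‖∑_{j=1}^{∞} t^{j−1} V_j^{diag}‖ ≤ 2‖V‖ and ‖S‖ ≤ C · t · ‖V‖. Here V_j^{diag} := P⁺ V_j P⁺ + P⁻ V_j P⁻ denotes the block-diagonal part of V_j. -/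
/-!
The gap gives `‖R‖ ≤ Δ⁻¹ ≤ 2`, hence `‖S_j‖ ≤ 4 ‖V_j‖`; moreover `[S_j, G] = -(P⁺ V_j P⁻ + h.c.)`,
so `‖[S_j, G]‖ ≤ 2 ‖V_j‖`. Bounding each nested commutator of the recursion by a product over
the blocks of its composition reduces the growth of `‖V_j‖` to a renewal inequality for sums
over compositions. The weight `w_j = K ^ (j - 1) / j ^ 2` is a supersolution of it, because
`∑_{0<b<j} 1 / (b ^ 2 (j - b) ^ 2) ≤ 8 / j ^ 2` makes its self-convolution at most `(8 / K) w_j`.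
Hence `‖V_j‖ ≤ ‖V‖ K ^ (j - 1)`, both series are dominated by geometric series once `t K ≤ 1/2`,
and the pinching bound `‖P⁺ W P⁺ + P⁻ W P⁻‖ ≤ ‖W‖` (the pinching averages `W` with its
conjugate by the unitary `P⁺ - P⁻`) keeps the diagonal sum below `2 ‖V‖`.
-/

/-- Iterated commutator along a list of indices:
`adList S [r₁, …, r_p] B = ad S_{r₁} (ad S_{r₂} ( … ad S_{r_p} (B) … ))`. -/
def adList {A : Type*} [Ring A] (S : ℕ → A) : List ℕ → A → A
  | [], B => B
  | r :: rs, B => S r * adList S rs B - adList S rs B * S r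

open Finset

namespace Composition

def headTail {n : ℕ} (c : Composition n) : Σ b : ℕ, Composition (n - b) :=
  ⟨c.blocks.headI, c.blocks.tail, fun h => c.blocks_pos (List.mem_of_mem_tail h),
    by rw [List.tail_sum, c.blocks_sum]⟩

variable {n : ℕ}

theorem blocks_eq_cons_headTail (hn : 0 < n) (c : Composition n) :
    c.blocks = c.headTail.1 :: c.headTail.2.blocks := by
  rcases hc : c.blocks with _ | ⟨b, l⟩
  · exact absurd (c.blocks_eq_nil.mp hc) hn.ne'
  · simp [headTail, hc]

theorem headTail_injective (hn : 0 < n) : Function.Injective (headTail (n := n)) := by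
  intro c d h
  ext1
  rw [blocks_eq_cons_headTail hn c, blocks_eq_cons_headTail hn d, h]

theorem headTail_fst_pos (hn : 0 < n) (c : Composition n) : 0 < c.headTail.1 :=
  c.blocks_pos (by rw [blocks_eq_cons_headTail hn c]; exact List.mem_cons_self)

theorem headTail_fst_lt (hn : 0 < n) {c : Composition n} (hc : 2 ≤ c.length) :
    c.headTail.1 < n := by
  have hlen := congrArg List.length (blocks_eq_cons_headTail hn c)
  have htail : c.headTail.2.blocks ≠ [] := by
    intro h
    simp only [h, List.length_cons, List.length_nil, blocks_length] at hlen
    omega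
  have := mt c.headTail.2.blocks_eq_nil.mpr htail
  omega

theorem lt_of_mem_blocks {c : Composition n} (hc : 2 ≤ c.length) {r : ℕ} (hr : r ∈ c.blocks) :
    r < n := by
  have hn : 0 < n := c.length_pos_iff.mp (by omega)
  rw [c.blocks_eq_cons_headTail hn, List.mem_cons] at hr
  rcases hr with rfl | hr
  · exact c.headTail_fst_lt hn hc
  · have := c.headTail.2.blocks_le hr
    have := c.headTail_fst_pos hn
    omega

end Composition

noncomputable def compositionSum (f : ℕ → ℝ) (n : ℕ) : ℝ :=
  ∑ c : Composition n, (c.blocks.map f).prod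

section compositionSum

variable {f : ℕ → ℝ}

theorem prod_map_blocks_nonneg (hf : ∀ n, 0 ≤ f n) {n : ℕ} (c : Composition n) :
    0 ≤ (c.blocks.map f).prod :=
  List.prod_nonneg (by simpa using fun r _ => hf r)

theorem sum_filter_two_le_length_le (hf : ∀ n, 0 ≤ f n) {n : ℕ} (hn : 0 < n) :
    ∑ c : Composition n with 2 ≤ c.length, (c.blocks.map f).prod
      ≤ ∑ b ∈ Ioo 0 n, f b * compositionSum f (n - b) := by
  set F : (Σ b : ℕ, Composition (n - b)) → ℝ := fun p => f p.1 * (p.2.blocks.map f).prod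
  calc ∑ c : Composition n with 2 ≤ c.length, (c.blocks.map f).prod
      = ∑ c : Composition n with 2 ≤ c.length, F c.headTail := by
        refine sum_congr rfl fun c _ => ?_
        rw [c.blocks_eq_cons_headTail hn, List.map_cons, List.prod_cons]
    _ = ∑ p ∈ (univ.filter fun c : Composition n => 2 ≤ c.length).image Composition.headTail,
          F p := by
        rw [sum_image fun c _ d _ h => Composition.headTail_injective hn h]
    _ ≤ ∑ p ∈ (Ioo 0 n).sigma fun _ => univ, F p := by
        refine sum_le_sum_of_subset_of_nonneg ?_ fun p _ _ =>
          mul_nonneg (hf _) (prod_map_blocks_nonneg hf _)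
        simp only [subset_iff, mem_image, mem_filter, mem_sigma, mem_Ioo, mem_univ, true_and,
          and_true, forall_exists_index, and_imp]
        rintro _ c hc rfl
        exact ⟨c.headTail_fst_pos hn, c.headTail_fst_lt hn hc⟩
    _ = ∑ b ∈ Ioo 0 n, f b * compositionSum f (n - b) := by
        rw [sum_sigma]
        simp only [compositionSum, mul_sum, F]

theorem compositionSum_le_of_renewal {u : ℕ → ℝ} (hf : ∀ n, 0 ≤ f n)
    (hu : ∀ n, 0 < n → f n + ∑ b ∈ Ioo 0 n, f b * u (n - b) ≤ u n) :
    ∀ n, 0 < n → compositionSum f n ≤ u n := by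
  intro n
  induction n using Nat.strong_induction_on with
  | _ n ih =>
  intro hn
  have hsingle : ∑ c : Composition n with ¬ 2 ≤ c.length, (c.blocks.map f).prod ≤ f n :=
    calc _ ≤ ∑ c ∈ {Composition.single n hn}, (c.blocks.map f).prod := by
          refine sum_le_sum_of_subset_of_nonneg (fun c hc => ?_)
            fun c _ _ => prod_map_blocks_nonneg hf c
          rw [mem_filter] at hc
          rw [mem_singleton, Composition.eq_single_iff_length]
          have := c.length_pos_iff.mpr hn
          omega
      _ = f n := by simp
  have hsplit : ∑ c : Composition n with 2 ≤ c.length, (c.blocks.map f).prod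
      ≤ ∑ b ∈ Ioo 0 n, f b * u (n - b) := by
    refine (sum_filter_two_le_length_le hf hn).trans (sum_le_sum fun b hb => ?_)
    rw [mem_Ioo] at hb
    exact mul_le_mul_of_nonneg_left (ih _ (by omega) (by omega)) (hf b)
  rw [compositionSum, ← sum_filter_add_sum_filter_not _ (2 ≤ ·.length)]
  linarith [hu n hn]

end compositionSum

theorem inv_sq_mul_inv_sq_le {x y : ℝ} (hx : 0 < x) (hy : 0 < y) :
    (x ^ 2 * y ^ 2)⁻¹ ≤ 2 / (x + y) ^ 2 * ((x ^ 2)⁻¹ + (y ^ 2)⁻¹) := by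
  rw [div_mul_eq_mul_div, le_div_iff₀ (by positivity)]
  field_simp
  nlinarith [sq_nonneg (x - y)]

theorem sum_Ioo_inv_sq_mul_inv_sq_le (n : ℕ) :
    ∑ b ∈ Ioo 0 n, ((b : ℝ) ^ 2 * ((n - b : ℕ) : ℝ) ^ 2)⁻¹ ≤ 8 / (n : ℝ) ^ 2 := by
  have hreflect :
      ∑ b ∈ Ioo 0 n, (((n - b : ℕ) : ℝ) ^ 2)⁻¹ = ∑ b ∈ Ioo 0 n, ((b : ℝ) ^ 2)⁻¹ :=
    sum_nbij' (n - ·) (n - ·) (fun b hb => by rw [mem_Ioo] at hb ⊢; omega)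
      (fun b hb => by rw [mem_Ioo] at hb ⊢; omega) (fun b hb => by rw [mem_Ioo] at hb; omega)
      (fun b hb => by rw [mem_Ioo] at hb; omega) (fun _ _ => rfl)
  have hsq : ∑ b ∈ Ioo 0 n, ((b : ℝ) ^ 2)⁻¹ ≤ 2 := by
    simpa using sum_Ioo_inv_sq_le (α := ℝ) 0 n
  calc ∑ b ∈ Ioo 0 n, ((b : ℝ) ^ 2 * ((n - b : ℕ) : ℝ) ^ 2)⁻¹
      ≤ ∑ b ∈ Ioo 0 n, 2 / (n : ℝ) ^ 2 * (((b : ℝ) ^ 2)⁻¹ + (((n - b : ℕ) : ℝ) ^ 2)⁻¹) := by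
        refine sum_le_sum fun b hb => ?_
        rw [mem_Ioo] at hb
        have hsum : (b : ℝ) + ((n - b : ℕ) : ℝ) = n := by norm_cast; omega
        rw [← hsum]
        exact inv_sq_mul_inv_sq_le (by norm_cast; omega) (by norm_cast; omega)
    _ = 2 / (n : ℝ) ^ 2 * (∑ b ∈ Ioo 0 n, ((b : ℝ) ^ 2)⁻¹ + ∑ b ∈ Ioo 0 n, ((b : ℝ) ^ 2)⁻¹) := by
        rw [← mul_sum, sum_add_distrib, hreflect]
    _ ≤ 2 / (n : ℝ) ^ 2 * (2 + 2) := by gcongr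
    _ = 8 / (n : ℝ) ^ 2 := by ring

noncomputable def geomInvSqWeight (K : ℝ) (n : ℕ) : ℝ := K ^ (n - 1) / (n : ℝ) ^ 2

section geomInvSqWeight

variable {K : ℝ}

theorem geomInvSqWeight_nonneg (hK : 0 ≤ K) (n : ℕ) : 0 ≤ geomInvSqWeight K n := by
  unfold geomInvSqWeight; positivity

theorem geomInvSqWeight_succ_le (hK : 0 ≤ K) (n : ℕ) : geomInvSqWeight K (n + 1) ≤ K ^ n := by
  unfold geomInvSqWeight
  refine div_le_self (by positivity) (one_le_pow₀ ?_)
  push_cast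
  linarith [(n.cast_nonneg : (0 : ℝ) ≤ n)]

theorem geomInvSqWeight_pred_le (hK : 0 < K) {n : ℕ} (hn : 2 ≤ n) :
    geomInvSqWeight K (n - 1) ≤ 4 / K * geomInvSqWeight K n := by
  obtain ⟨m, rfl⟩ : ∃ m, n = m + 2 := ⟨n - 2, by omega⟩
  simp only [geomInvSqWeight, show m + 2 - 1 = m + 1 by omega, Nat.add_sub_cancel, pow_succ]
  push_cast
  rw [div_le_iff₀ (by positivity)]
  field_simp
  nlinarith [pow_pos hK m, (m.cast_nonneg : (0 : ℝ) ≤ m)]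

theorem sum_geomInvSqWeight_mul_le (hK : 0 < K) (n : ℕ) :
    ∑ b ∈ Ioo 0 n, geomInvSqWeight K b * geomInvSqWeight K (n - b)
      ≤ 8 / K * geomInvSqWeight K n := by
  rcases lt_or_ge n 2 with hn | hn
  · rw [sum_eq_zero fun b hb => by rw [mem_Ioo] at hb; omega]
    exact mul_nonneg (by positivity) (geomInvSqWeight_nonneg hK.le n)
  calc ∑ b ∈ Ioo 0 n, geomInvSqWeight K b * geomInvSqWeight K (n - b)
      = K ^ (n - 2) * ∑ b ∈ Ioo 0 n, ((b : ℝ) ^ 2 * ((n - b : ℕ) : ℝ) ^ 2)⁻¹ := by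
        rw [mul_sum]
        refine sum_congr rfl fun b hb => ?_
        rw [mem_Ioo] at hb
        rw [geomInvSqWeight, geomInvSqWeight, div_mul_div_comm, ← pow_add,
          show b - 1 + (n - b - 1) = n - 2 by omega, div_eq_mul_inv]
    _ ≤ K ^ (n - 2) * (8 / (n : ℝ) ^ 2) := by gcongr; exact sum_Ioo_inv_sq_mul_inv_sq_le n
    _ = 8 / K * geomInvSqWeight K n := by
        rw [geomInvSqWeight, show n - 1 = n - 2 + 1 by omega]
        field_simp
        ring

theorem compositionSum_geomInvSqWeight_le (hK : 256 ≤ K) :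
    ∀ n, 0 < n → compositionSum (16 * geomInvSqWeight K ·) n ≤ 32 * geomInvSqWeight K n := by
  have hw := geomInvSqWeight_nonneg (K := K) (by linarith)
  refine compositionSum_le_of_renewal (fun n => mul_nonneg (by norm_num) (hw n)) fun n _ => ?_
  have hconv : ∑ b ∈ Ioo 0 n, geomInvSqWeight K b * geomInvSqWeight K (n - b)
      ≤ 1 / 32 * geomInvSqWeight K n :=
    (sum_geomInvSqWeight_mul_le (by linarith) n).trans <| mul_le_mul_of_nonneg_right
      (by rw [div_le_div_iff₀ (by linarith) (by norm_num)]; linarith) (hw n)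
  have hsum : ∑ b ∈ Ioo 0 n, 16 * geomInvSqWeight K b * (32 * geomInvSqWeight K (n - b))
      = 512 * ∑ b ∈ Ioo 0 n, geomInvSqWeight K b * geomInvSqWeight K (n - b) := by
    rw [mul_sum]; exact sum_congr rfl fun b _ => by ring
  linarith [hw n]

theorem sum_filter_two_le_length_geomInvSqWeight_le (hK : 256 ≤ K) {n : ℕ} (hn : 0 < n) :
    ∑ c : Composition n with 2 ≤ c.length, (c.blocks.map (16 * geomInvSqWeight K ·)).prod
      ≤ 4096 / K * geomInvSqWeight K n := by
  have hw := geomInvSqWeight_nonneg (K := K) (by linarith)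
  calc _ ≤ ∑ b ∈ Ioo 0 n,
          16 * geomInvSqWeight K b * compositionSum (16 * geomInvSqWeight K ·) (n - b) :=
        sum_filter_two_le_length_le (fun r => mul_nonneg (by norm_num) (hw r)) hn
    _ ≤ ∑ b ∈ Ioo 0 n, 16 * geomInvSqWeight K b * (32 * geomInvSqWeight K (n - b)) := by
        refine sum_le_sum fun b hb => ?_
        rw [mem_Ioo] at hb
        exact mul_le_mul_of_nonneg_left (compositionSum_geomInvSqWeight_le hK _ (by omega))
          (mul_nonneg (by norm_num) (hw b))
    _ = 512 * ∑ b ∈ Ioo 0 n, geomInvSqWeight K b * geomInvSqWeight K (n - b) := by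
        rw [mul_sum]; exact sum_congr rfl fun b _ => by ring
    _ ≤ 512 * (8 / K * geomInvSqWeight K n) := by
        gcongr; exact sum_geomInvSqWeight_mul_le (by linarith) n
    _ = 4096 / K * geomInvSqWeight K n := by ring

end geomInvSqWeight

section adList

variable {A : Type*} [NormedRing A]

theorem norm_commutator_le (a b : A) : ‖a * b - b * a‖ ≤ 2 * ‖a‖ * ‖b‖ :=
  calc _ ≤ ‖a * b‖ + ‖b * a‖ := norm_sub_le _ _
    _ ≤ ‖a‖ * ‖b‖ + ‖b‖ * ‖a‖ := add_le_add (norm_mul_le _ _) (norm_mul_le _ _)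
    _ = 2 * ‖a‖ * ‖b‖ := by ring

theorem norm_adList_le (S : ℕ → A) (f : ℕ → ℝ) (B : A) (β : ℝ) :
    ∀ l : List ℕ, l ≠ [] → (∀ r ∈ l, 2 * ‖S r‖ ≤ f r) →
      (∀ r ∈ l, ‖S r * B - B * S r‖ ≤ f r * β) → ‖adList S l B‖ ≤ (l.map f).prod * β
  | [r], _, _, hB => by simpa [adList] using hB r List.mem_cons_self
  | r :: r' :: l, _, hS, hB => by
    have ih := norm_adList_le S f B β (r' :: l) (List.cons_ne_nil _ _)
      (fun x hx => hS x (List.mem_cons_of_mem _ hx)) (fun x hx => hB x (List.mem_cons_of_mem _ hx))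
    have hr := hS r List.mem_cons_self
    calc ‖adList S (r :: r' :: l) B‖ ≤ 2 * ‖S r‖ * ‖adList S (r' :: l) B‖ :=
          norm_commutator_le _ _
      _ ≤ f r * (((r' :: l).map f).prod * β) :=
          mul_le_mul hr ih (norm_nonneg _) ((mul_nonneg zero_le_two (norm_nonneg _)).trans hr)
      _ = ((r :: r' :: l).map f).prod * β := by simp [mul_assoc]

theorem norm_sum_inv_factorial_smul_adList_le [NormedSpace ℂ A] {n : ℕ} (hn : 0 < n)
    (s : Finset (Composition n)) (S : ℕ → A) (f : ℕ → ℝ) (B : A) (β : ℝ)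
    (hS : ∀ c ∈ s, ∀ r ∈ c.blocks, 2 * ‖S r‖ ≤ f r)
    (hB : ∀ c ∈ s, ∀ r ∈ c.blocks, ‖S r * B - B * S r‖ ≤ f r * β) :
    ‖∑ c ∈ s, ((c.length.factorial : ℂ))⁻¹ • adList S c.blocks B‖
      ≤ (∑ c ∈ s, (c.blocks.map f).prod) * β := by
  rw [sum_mul]
  refine (norm_sum_le _ _).trans (sum_le_sum fun c hc => ?_)
  have hfact : ‖((c.length.factorial : ℂ))⁻¹‖ ≤ 1 := by
    rw [norm_inv, Complex.norm_natCast]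
    exact inv_le_one_of_one_le₀ (by exact_mod_cast c.length.factorial_pos)
  calc _ ≤ ‖((c.length.factorial : ℂ))⁻¹‖ * ‖adList S c.blocks B‖ := norm_smul_le _ _
    _ ≤ ‖adList S c.blocks B‖ := mul_le_of_le_one_left (norm_nonneg _) hfact
    _ ≤ (c.blocks.map f).prod * β :=
        norm_adList_le S f B β c.blocks (mt c.blocks_eq_nil.mp hn.ne') (hS c hc) (hB c hc)

theorem norm_le_of_lieSchwinger_recursion [NormedSpace ℂ A] {K : ℝ} (hK : 640 ≤ K) {g v : A}
    {V S : ℕ → A} (hv : ‖v‖ ≤ 2) (hV1 : V 1 = v) (hS : ∀ r, 1 ≤ r → ‖S r‖ ≤ 4 * ‖V r‖)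
    (hSg : ∀ r, 1 ≤ r → ‖S r * g - g * S r‖ ≤ 2 * ‖V r‖)
    (hrec : ∀ j, 2 ≤ j → V j =
      (∑ c ∈ Finset.univ.filter (fun c : Composition j => 2 ≤ c.length),
          (((c.length).factorial : ℂ))⁻¹ • adList S c.blocks g)
      + ∑ c : Composition (j - 1), (((c.length).factorial : ℂ))⁻¹ • adList S c.blocks v) :
    ∀ j, 1 ≤ j → ‖V j‖ ≤ ‖v‖ * geomInvSqWeight K j := by
  have hw := geomInvSqWeight_nonneg (K := K) (by linarith)
  intro j
  induction j using Nat.strong_induction_on with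
  | _ j ih =>
  intro hj
  rcases hj.eq_or_lt with rfl | hj
  · simp [hV1, geomInvSqWeight]
  have hSf : ∀ r, 1 ≤ r → r < j → 2 * ‖S r‖ ≤ 16 * geomInvSqWeight K r := fun r h1 h2 => by
    nlinarith [hS r h1, ih r h2 h1, hw r]
  have hgf : ∀ r, 1 ≤ r → r < j →
      ‖S r * g - g * S r‖ ≤ 16 * geomInvSqWeight K r * (‖v‖ / 8) := fun r h1 h2 => by
    nlinarith [hSg r h1, ih r h2 h1]
  have hvf : ∀ r, 1 ≤ r → r < j → ‖S r * v - v * S r‖ ≤ 16 * geomInvSqWeight K r * ‖v‖ :=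
    fun r h1 h2 =>
      (norm_commutator_le _ _).trans (mul_le_mul_of_nonneg_right (hSf r h1 h2) (norm_nonneg v))
  have hG := norm_sum_inv_factorial_smul_adList_le (n := j) (by omega)
    (univ.filter fun c : Composition j => 2 ≤ c.length) S _ g _
    (fun c hc r hr => hSf r (c.one_le_blocks hr) (c.lt_of_mem_blocks (mem_filter.mp hc).2 hr))
    (fun c hc r hr => hgf r (c.one_le_blocks hr) (c.lt_of_mem_blocks (mem_filter.mp hc).2 hr))
  have hV := norm_sum_inv_factorial_smul_adList_le (n := j - 1) (by omega) univ S _ v _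
    (fun c _ r hr => hSf r (c.one_le_blocks hr) (by have := c.blocks_le hr; omega))
    (fun c _ r hr => hvf r (c.one_le_blocks hr) (by have := c.blocks_le hr; omega))
  have hsplit := sum_filter_two_le_length_geomInvSqWeight_le (K := K) (by linarith) (n := j)
    (by omega)
  have hcomp := compositionSum_geomInvSqWeight_le (K := K) (by linarith) (j - 1) (by omega)
  have hpred := geomInvSqWeight_pred_le (K := K) (by linarith) (n := j) (by omega)
  rw [hrec j hj]
  calc _ ≤ _ := norm_add_le _ _
    _ ≤ 4096 / K * geomInvSqWeight K j * (‖v‖ / 8)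
          + 32 * (4 / K * geomInvSqWeight K j) * ‖v‖ :=
        add_le_add (hG.trans (mul_le_mul_of_nonneg_right hsplit (by positivity)))
          (hV.trans (mul_le_mul_of_nonneg_right (hcomp.trans (by linarith)) (norm_nonneg v)))
    _ = 640 / K * (‖v‖ * geomInvSqWeight K j) := by ring
    _ ≤ ‖v‖ * geomInvSqWeight K j :=
        mul_le_of_le_one_left (mul_nonneg (norm_nonneg v) (hw j))
          ((div_le_one (by linarith)).mpr hK)

end adList

section StarRing

variable {A : Type*} [Ring A] [StarRing A] {p : A}

theorem IsStarProjection.one_sub_sub_self_mem_unitary (hp : IsStarProjection p) :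
    1 - p - p ∈ unitary A := by
  have hsq : (1 - p - p) * (1 - p - p) = 1 := by
    simp only [sub_mul, mul_sub, one_mul, mul_one, hp.isIdempotentElem.eq]
    abel
  have hsa : star (1 - p - p) = 1 - p - p := by
    simp [hp.isSelfAdjoint.star_eq]
  exact Unitary.mem_iff.mpr ⟨by rw [hsa, hsq], by rw [hsa, hsq]⟩

theorem commutator_sub_star_eq {h r w : A} (hh : IsSelfAdjoint h) (hp : IsSelfAdjoint p)
    (hhp : h * p = 0) (hhr : h * r = 1 - p) :
    (r * w * p - star (r * w * p)) * h - h * (r * w * p - star (r * w * p))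
      = -((1 - p) * w * p + star ((1 - p) * w * p)) := by
  have hph : p * h = 0 := by simpa [hh.star_eq, hp.star_eq] using congrArg star hhp
  have hxh : r * w * p * h = 0 := by rw [mul_assoc, hph, mul_zero]
  have hhx : h * (r * w * p) = (1 - p) * w * p := by rw [← mul_assoc, ← mul_assoc, hhr]
  have hxh' : star (r * w * p) * h = star ((1 - p) * w * p) := by
    rw [← hhx, star_mul h, hh.star_eq]
  have hhx' : h * star (r * w * p) = 0 := by
    rw [← hh.star_eq, ← star_mul, hxh, star_zero]
  rw [sub_mul, mul_sub, hxh, hhx, hxh', hhx']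
  abel

end StarRing

section CStarRing

variable {A : Type*} [NormedRing A] [StarRing A] [CStarRing A] {p : A}

theorem IsStarProjection.norm_pinching_le [NormedSpace ℝ A] (hp : IsStarProjection p) (w : A) :
    ‖(1 - p) * w * (1 - p) + p * w * p‖ ≤ ‖w‖ := by
  have hu := hp.one_sub_sub_self_mem_unitary
  have hdouble : (2 : ℕ) • ((1 - p) * w * (1 - p) + p * w * p)
      = w + (1 - p - p) * w * (1 - p - p) := by
    simp only [sub_mul, mul_sub, one_mul, mul_one, two_nsmul]
    abel
  have h2 : ‖w + (1 - p - p) * w * (1 - p - p)‖ ≤ 2 * ‖w‖ :=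
    calc _ ≤ ‖w‖ + ‖(1 - p - p) * w * (1 - p - p)‖ := norm_add_le _ _
      _ = 2 * ‖w‖ := by
        rw [CStarRing.norm_mul_mem_unitary _ hu, CStarRing.norm_mem_unitary_mul _ hu]; ring
  rw [← hdouble, RCLike.norm_nsmul ℝ, nsmul_eq_mul] at h2
  push_cast at h2
  linarith

theorem IsStarProjection.norm_sub_star_le (hp : IsStarProjection p) (r w : A) :
    ‖r * w * p - star (r * w * p)‖ ≤ 2 * ‖r‖ * ‖w‖ :=
  calc _ ≤ ‖r * w * p‖ + ‖star (r * w * p)‖ := norm_sub_le _ _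
    _ = 2 * ‖r * w * p‖ := by rw [norm_star]; ring
    _ ≤ 2 * (‖r‖ * ‖w‖ * 1) := by
        gcongr
        exact (norm_mul_le _ _).trans (by gcongr; exacts [norm_mul_le _ _, hp.norm_le])
    _ = 2 * ‖r‖ * ‖w‖ := by ring

theorem IsStarProjection.norm_commutator_sub_star_le [Algebra ℂ A] [StarModule ℂ A] {g r : A}
    {e : ℝ} (hp : IsStarProjection p) (hg : IsSelfAdjoint g) (hgp : g * p = (e : ℂ) • p)
    (hgr : (g - (e : ℂ) • 1) * r = 1 - p) (w : A) :
    ‖(r * w * p - star (r * w * p)) * g - g * (r * w * p - star (r * w * p))‖ ≤ 2 * ‖w‖ := by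
  have hh : IsSelfAdjoint (g - (e : ℂ) • 1) :=
    hg.sub (IsSelfAdjoint.smul (Complex.conj_ofReal e) (IsSelfAdjoint.one _))
  have hhp : (g - (e : ℂ) • 1) * p = 0 := by
    rw [sub_mul, hgp, smul_mul_assoc, one_mul, sub_self]
  have hshift : ∀ x : A, x * (g - (e : ℂ) • 1) - (g - (e : ℂ) • 1) * x = x * g - g * x := by
    intro x
    simp only [mul_sub, sub_mul, mul_smul_comm, smul_mul_assoc, mul_one, one_mul]
    abel
  rw [← hshift, commutator_sub_star_eq hh hp.isSelfAdjoint hhp hgr, norm_neg]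
  have hb : ‖(1 - p) * w * p‖ ≤ ‖w‖ :=
    calc _ ≤ 1 * ‖w‖ * 1 := by
          refine (norm_mul_le _ _).trans (mul_le_mul ((norm_mul_le _ _).trans ?_) hp.norm_le
            (norm_nonneg _) (by positivity))
          exact mul_le_mul_of_nonneg_right hp.one_sub.norm_le (norm_nonneg _)
      _ = ‖w‖ := by ring
  calc _ ≤ ‖(1 - p) * w * p‖ + ‖star ((1 - p) * w * p)‖ := norm_add_le _ _
    _ ≤ 2 * ‖w‖ := by rw [norm_star]; linarith

end CStarRing

open scoped ComplexInnerProductSpace in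
theorem norm_le_inv_of_spectral_gap {𝒦 : Type*} [NormedAddCommGroup 𝒦] [InnerProductSpace ℂ 𝒦]
    [CompleteSpace 𝒦] {Q H R : 𝒦 →L[ℂ] 𝒦} {Δ : ℝ} (hΔ : 0 < Δ) (hQ : IsStarProjection Q)
    (hgap : (Q * H * Q - (Δ : ℂ) • Q).IsPositive) (hHR : H * R = Q) (hRQ : R = Q * R * Q) :
    ‖R‖ ≤ Δ⁻¹ := by
  have hQR : Q * R = R := by
    rw [hRQ, ← mul_assoc, ← mul_assoc, hQ.isIdempotentElem.eq]
  have hTR : (Q * H * Q - (Δ : ℂ) • Q) * R = Q - (Δ : ℂ) • R := by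
    rw [sub_mul, smul_mul_assoc, hQR, mul_assoc, hQR, mul_assoc, hHR, hQ.isIdempotentElem.eq]
  refine ContinuousLinearMap.opNorm_le_bound _ (inv_nonneg.mpr hΔ.le) fun y => ?_
  have hnonneg := hgap.re_inner_nonneg_left (R y)
  rw [show (Q * H * Q - (Δ : ℂ) • Q) (R y) = Q y - (Δ : ℂ) • R y from DFunLike.congr_fun hTR y,
    inner_sub_left, inner_smul_left, map_sub, Complex.conj_ofReal] at hnonneg
  have hQy : RCLike.re ⟪Q y, R y⟫ ≤ ‖y‖ * ‖R y‖ :=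
    (RCLike.re_le_norm _).trans <| (norm_inner_le_norm _ _).trans <|
      mul_le_mul_of_nonneg_right ((Q.le_opNorm y).trans
        (mul_le_of_le_one_left (norm_nonneg y) hQ.norm_le)) (norm_nonneg _)
  have hRy : RCLike.re ((Δ : ℂ) * ⟪R y, R y⟫) = Δ * ‖R y‖ ^ 2 := by
    rw [← inner_self_eq_norm_sq (𝕜 := ℂ)]; exact RCLike.re_ofReal_mul Δ _
  have hsq : Δ * ‖R y‖ ^ 2 ≤ ‖y‖ * ‖R y‖ := by linarith
  rw [inv_mul_eq_div, le_div_iff₀ hΔ]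
  rcases (norm_nonneg (R y)).eq_or_lt with h0 | hpos
  · rw [← h0, zero_mul]; exact norm_nonneg y
  · nlinarith

theorem summable_and_norm_tsum_le_of_norm_le_geometric {E : Type*} [NormedAddCommGroup E]
    [CompleteSpace E] {f : ℕ → E} {a q : ℝ} (hq₀ : 0 ≤ q) (hq : q ≤ 1 / 2)
    (hf : ∀ n, ‖f n‖ ≤ a * q ^ n) : Summable f ∧ ‖∑' n, f n‖ ≤ 2 * a := by
  have hg := (hasSum_geometric_of_lt_one hq₀ (by linarith)).mul_left a
  have ha : 0 ≤ a := by simpa using (norm_nonneg _).trans (hf 0)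
  refine ⟨.of_norm_bounded hg.summable hf, (tsum_of_norm_bounded hg hf).trans ?_⟩
  rw [mul_comm 2 a]
  exact mul_le_mul_of_nonneg_left ((inv_le_comm₀ (by linarith) two_pos).mpr (by linarith)) ha

theorem norm_ofReal_pow_smul {E : Type*} [NormedAddCommGroup E] [NormedSpace ℂ E] {t : ℝ}
    (ht : 0 ≤ t) (k : ℕ) (x : E) : ‖(t : ℂ) ^ k • x‖ = t ^ k * ‖x‖ := by
  rw [norm_smul, norm_pow, Complex.norm_real, Real.norm_of_nonneg ht]

/-- there are a universal constant `C > 0` and a universal `t₀ > 0` such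
that for every finite-dimensional complex Hilbert space `𝒦`, every self-adjoint `G`
block-diagonal w.r.t. an orthogonal projection `P⁻`, with `G P⁻ = E P⁻`,
`E = min spec G`, spectral gap `P⁺(G-E)P⁺ ≥ Δ P⁺` with `Δ ≥ 1/2` (with `R` the inverse
of `G - E` on the range of `P⁺`), and every self-adjoint `V` with `‖V‖ ≤ 2`, the
Lie-Schwinger series `S = ∑_{j≥1} t^j S_j` and `∑_{j≥1} t^{j-1} V_j^{diag}` (with
`V_j`, `S_j` given by the Lie-Schwinger recursion) converge in operator norm for all
`0 < t < t₀`, with `‖∑_{j≥1} t^{j-1} V_j^{diag}‖ ≤ 2‖V‖` and `‖S‖ ≤ C t ‖V‖`. -/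
theorem lieSchwinger_series_bounds :
    ∃ C : ℝ, 0 < C ∧ ∃ t₀ : ℝ, 0 < t₀ ∧
    ∀ (𝒦 : Type) [NormedAddCommGroup 𝒦] [InnerProductSpace ℂ 𝒦]
      [FiniteDimensional ℂ 𝒦],
    ∀ (G Pm R V : 𝒦 →L[ℂ] 𝒦) (E Δ : ℝ),
      IsSelfAdjoint G →
      IsSelfAdjoint Pm → Pm * Pm = Pm →
      G = (1 - Pm) * G * (1 - Pm) + Pm * G * Pm →
      G * Pm = (E : ℂ) • Pm →
      (E : ℂ) ∈ spectrum ℂ G →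
      (∀ z ∈ spectrum ℂ G, E ≤ z.re) →
      (1 / 2 : ℝ) ≤ Δ →
      ((((1 : 𝒦 →L[ℂ] 𝒦) - Pm) * (G - (E : ℂ) • 1) * (1 - Pm))
        - ((Δ : ℂ) • ((1 : 𝒦 →L[ℂ] 𝒦) - Pm))).IsPositive →
      R * (G - (E : ℂ) • 1) = 1 - Pm →
      (G - (E : ℂ) • 1) * R = 1 - Pm →
      R = (1 - Pm) * R * (1 - Pm) →
      IsSelfAdjoint V → ‖V‖ ≤ 2 →
    ∀ (Vseq Sseq : ℕ → 𝒦 →L[ℂ] 𝒦),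
      Vseq 1 = V →
      (∀ j, 1 ≤ j → Sseq j = R * Vseq j * Pm
        - ContinuousLinearMap.adjoint (R * Vseq j * Pm)) →
      (∀ j, 2 ≤ j → Vseq j =
        (∑ c ∈ Finset.univ.filter (fun c : Composition j => 2 ≤ c.length),
            (((c.length).factorial : ℂ))⁻¹ • adList Sseq c.blocks G)
        + ∑ c : Composition (j - 1),
            (((c.length).factorial : ℂ))⁻¹ • adList Sseq c.blocks V) →
    ∀ t : ℝ, 0 < t → t < t₀ →
      Summable (fun j : ℕ => ((t : ℂ)) ^ (j + 1) • Sseq (j + 1)) ∧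
      Summable (fun j : ℕ => ((t : ℂ)) ^ j •
        ((1 - Pm) * Vseq (j + 1) * (1 - Pm) + Pm * Vseq (j + 1) * Pm)) ∧
      ‖∑' j : ℕ, ((t : ℂ)) ^ j •
          ((1 - Pm) * Vseq (j + 1) * (1 - Pm) + Pm * Vseq (j + 1) * Pm)‖ ≤ 2 * ‖V‖ ∧
      ‖∑' j : ℕ, ((t : ℂ)) ^ (j + 1) • Sseq (j + 1)‖ ≤ C * t * ‖V‖ := by
  refine ⟨8, by norm_num, 1 / 2048, by norm_num, ?_⟩
  intro 𝒦 _ _ _ G Pm R V E Δ hG hPm_sa hPm_idem _ hGPm _ _ hΔ hgap _ hGR hR _ hV Vseq Sseq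
    hV1 hS hVrec t ht ht₀
  simp only [← ContinuousLinearMap.star_eq_adjoint] at hS
  have hPm : IsStarProjection Pm := ⟨hPm_idem, hPm_sa⟩
  have hRnorm : ‖R‖ ≤ 2 :=
    (norm_le_inv_of_spectral_gap (by linarith) hPm.one_sub hgap hGR hR).trans
      ((inv_le_comm₀ (by linarith) two_pos).mpr (by linarith))
  have hSnorm : ∀ r, 1 ≤ r → ‖Sseq r‖ ≤ 4 * ‖Vseq r‖ := fun r hr => by
    rw [hS r hr]; nlinarith [hPm.norm_sub_star_le R (Vseq r), norm_nonneg (Vseq r)]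
  have hSG : ∀ r, 1 ≤ r → ‖Sseq r * G - G * Sseq r‖ ≤ 2 * ‖Vseq r‖ := fun r hr => by
    rw [hS r hr]; exact hPm.norm_commutator_sub_star_le hG hGPm hGR (Vseq r)
  have hVseq : ∀ k, ‖Vseq (k + 1)‖ ≤ ‖V‖ * 1024 ^ k := fun k =>
    (norm_le_of_lieSchwinger_recursion (by norm_num) hV hV1 hSnorm hSG hVrec _ k.succ_pos).trans
      (mul_le_mul_of_nonneg_left (geomInvSqWeight_succ_le (by norm_num) k) (norm_nonneg V))
  have hq : t * 1024 ≤ 1 / 2 := by linarith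
  obtain ⟨hSsum, hSle⟩ := summable_and_norm_tsum_le_of_norm_le_geometric (by positivity) hq
    (f := fun k => (t : ℂ) ^ (k + 1) • Sseq (k + 1)) (a := 4 * t * ‖V‖) fun k => by
      rw [norm_ofReal_pow_smul (E := 𝒦 →L[ℂ] 𝒦) ht.le]
      calc _ ≤ t ^ (k + 1) * (4 * (‖V‖ * 1024 ^ k)) := by
            gcongr; exact (hSnorm _ k.succ_pos).trans (by gcongr; exact hVseq k)
        _ = _ := by ring
  obtain ⟨hDsum, hDle⟩ := summable_and_norm_tsum_le_of_norm_le_geometric (by positivity) hq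
    (f := fun k => (t : ℂ) ^ k • ((1 - Pm) * Vseq (k + 1) * (1 - Pm) + Pm * Vseq (k + 1) * Pm))
    (a := ‖V‖) fun k => by
      rw [norm_ofReal_pow_smul (E := 𝒦 →L[ℂ] 𝒦) ht.le, mul_pow, mul_left_comm]
      gcongr; exact (hPm.norm_pinching_le _).trans (hVseq k)
  exact ⟨hSsum, hDsum, hDle, hSle.trans_eq (by ring)⟩
end

section
/- Under the stated assumptions, for any self-adjoint operator W on 𝒦, the operator S := (G − E)^{-1} P⁺ W P⁻ − (the adjoint of this operator) satisfies the commutator identity [S, G] = − P⁺ W P⁻ − P⁻ W P⁺. -/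
/-!
Write `A := G - E`. The scalar `E` commutes with everything, so `[S, G] = [S, A]`. Since
`A P⁻ = 0 = P⁻ A` and `A R = P⁺ = (A R)† = R† A`, expanding `[S, A]` with
`S = R W P⁻ - P⁻ W R†` leaves exactly `-P⁺ W P⁻ - P⁻ W P⁺`.
-/

theorem IsSelfAdjoint.commutator_sub_star_eq {α : Type*} [Ring α] [StarRing α] {A P R W : α}
    (hA : IsSelfAdjoint A) (hP : IsSelfAdjoint P) (hW : IsSelfAdjoint W)
    (hAP : A * P = 0) (hAR : A * R = 1 - P) :
    (R * W * P - star (R * W * P)) * A - A * (R * W * P - star (R * W * P)) =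
      -((1 - P) * W * P) - P * W * (1 - P) := by
  have hPA : P * A = 0 := by simpa [hA.star_eq, hP.star_eq] using congrArg star hAP
  have hRA : star R * A = 1 - P := by
    simpa [hA.star_eq, hP.star_eq] using congrArg star hAR
  have hstar : star (R * W * P) = P * W * star R := by
    rw [star_mul, star_mul, hP.star_eq, hW.star_eq, mul_assoc]
  rw [hstar]
  calc (R * W * P - P * W * star R) * A - A * (R * W * P - P * W * star R)
      = R * W * (P * A) - P * W * (star R * A) - A * R * W * P + A * P * W * star R := by
        noncomm_ring
    _ = -((1 - P) * W * P) - P * W * (1 - P) := by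
        rw [hPA, hRA, hAR, hAP]
        noncomm_ring

theorem commutator_sub_algebraMap {R α : Type*} [CommSemiring R] [Ring α] [Algebra R α]
    (S G : α) (c : R) :
    S * (G - algebraMap R α c) - (G - algebraMap R α c) * S = S * G - G * S := by
  rw [mul_sub, sub_mul, Algebra.commutes]
  abel

theorem lieSchwinger_commutator_identity_general
    {𝒦 : Type*} [NormedAddCommGroup 𝒦] [InnerProductSpace ℂ 𝒦] [FiniteDimensional ℂ 𝒦]
    (G Pm R : 𝒦 →L[ℂ] 𝒦) (E : ℝ)
    (hG : IsSelfAdjoint G)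
    (hPm : IsSelfAdjoint Pm)
    (hGPm : G * Pm = (E : ℂ) • Pm)
    (hR2 : (G - (E : ℂ) • 1) * R = 1 - Pm)
    (W : 𝒦 →L[ℂ] 𝒦) (hW : IsSelfAdjoint W) :
    letI S := R * W * Pm - ContinuousLinearMap.adjoint (R * W * Pm)
    S * G - G * S = -((1 - Pm) * W * Pm) - Pm * W * (1 - Pm) := by
  have hscalar : (E : ℂ) • (1 : 𝒦 →L[ℂ] 𝒦) = algebraMap ℂ _ (E : ℂ) :=
    (Algebra.algebraMap_eq_smul_one _).symm
  have hA : IsSelfAdjoint (G - (E : ℂ) • 1) := by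
    rw [hscalar]
    exact hG.sub (.algebraMap _ (Complex.conj_ofReal E))
  have hAPm : (G - (E : ℂ) • 1) * Pm = 0 := by rw [sub_mul, smul_one_mul, hGPm, sub_self]
  rw [← ContinuousLinearMap.star_eq_adjoint, ← commutator_sub_algebraMap _ G (E : ℂ), ← hscalar]
  exact hA.commutator_sub_star_eq hPm hW hAPm hR2

/-- let `G` be a self-adjoint operator on a finite-dimensional complex
Hilbert space `𝒦`, `P⁻` an orthogonal projection, `P⁺ = 𝟙 - P⁻`, with `G` block-diagonal
w.r.t. `P⁻`, `G P⁻ = E P⁻` where `E = min spec G`, and spectral gap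
`P⁺ (G - E) P⁺ ≥ Δ P⁺` with `Δ > 0`.  Let `R` be the inverse of `G - E` on the range of
`P⁺` (characterized by `R (G - E) = (G - E) R = P⁺` and `R = P⁺ R P⁺`).  Then for any
self-adjoint `W`, the operator `S = R W P⁻ - (R W P⁻)†` satisfies
`[S, G] = -P⁺ W P⁻ - P⁻ W P⁺`. -/
theorem lieSchwinger_commutator_identity
    {𝒦 : Type*} [NormedAddCommGroup 𝒦] [InnerProductSpace ℂ 𝒦] [FiniteDimensional ℂ 𝒦]
    (G Pm R : 𝒦 →L[ℂ] 𝒦) (E Δ : ℝ)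
    (hG : IsSelfAdjoint G)
    (hPm : IsSelfAdjoint Pm) (hPmIdem : Pm * Pm = Pm)
    (hblock : G = (1 - Pm) * G * (1 - Pm) + Pm * G * Pm)
    (hGPm : G * Pm = (E : ℂ) • Pm)
    (hEmem : (E : ℂ) ∈ spectrum ℂ G)
    (hEmin : ∀ z ∈ spectrum ℂ G, E ≤ z.re)
    (hΔ : 0 < Δ)
    (hgap : (((1 - Pm) * (G - (E : ℂ) • 1) * (1 - Pm))
      - ((Δ : ℂ) • (1 - Pm))).IsPositive)
    (hR1 : R * (G - (E : ℂ) • 1) = 1 - Pm)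
    (hR2 : (G - (E : ℂ) • 1) * R = 1 - Pm)
    (hR3 : R = (1 - Pm) * R * (1 - Pm))
    (W : 𝒦 →L[ℂ] 𝒦) (hW : IsSelfAdjoint W) :
    letI S := R * W * Pm - ContinuousLinearMap.adjoint (R * W * Pm)
    S * G - G * S = -((1 - Pm) * W * Pm) - Pm * W * (1 - Pm) :=
  lieSchwinger_commutator_identity_general G Pm R E hG hPm hGPm hR2 W hW
end
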